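/- arXiv:2308.13047 — 5 statements merged into one kernel-verified Lean document; each statement's English description precedes it below -/
import Mathlib

section
/- Let (Θ, 𝒜) be a measurable space, let π and q be probability measures on Θ with q ≪ π and KL(q ‖ π) < ∞, let m ≥ 1, and let f_1, …, f_m : Θ → ℝ be measurable functions with f_s(θ) > 0 for all θ, such that ∏_{s=1}^m f_s is integrable with respect to π and log ∘ f_s is integrable with respect to q for each s. Then log (∫_Θ ∏_{s=1}^m f_s dπ) ≥ Σ_{s=1}^m ( ∫_Θ log f_s dq − (1/m) · KL(q ‖ π) ), i.e., the log marginal likelihood is bounded below by the evidence lower bound decomposed into m per-source components. -/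
open MeasureTheory

/-!
The ELBO bound is the Donsker–Varadhan (Gibbs) variational inequality
`∫ g dq - KL(q‖π) ≤ log ∫ exp g dπ` applied to `g = ∑ₛ log fₛ`, for which `exp g = ∏ₛ fₛ`;
the defect in that inequality is `KL(q ‖ π.tilted g) ≥ 0`. Splitting `KL(q‖π)` into `m` equal
shares gives the per-source decomposition.
-/

namespace MeasureTheory

open Real InformationTheory

variable {α : Type*} [MeasurableSpace α] {μ ν : Measure α} {g : α → ℝ}

theorem integral_sub_integral_llr_le_log_integral_exp [IsProbabilityMeasure μ] [SigmaFinite ν]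
    (hμν : μ ≪ ν) (h_int : Integrable (llr μ ν) μ) (hgμ : Integrable g μ)
    (hgν : Integrable (fun x ↦ exp (g x)) ν) :
    ∫ x, g x ∂μ - ∫ x, llr μ ν x ∂μ ≤ log (∫ x, exp (g x) ∂ν) := by
  have : NeZero ν := ⟨fun hν ↦ IsProbabilityMeasure.ne_zero μ
    (Measure.absolutelyContinuous_zero_iff.mp (hν ▸ hμν))⟩
  have : IsProbabilityMeasure (ν.tilted g) := isProbabilityMeasure_tilted hgν
  have gibbs := integral_llr_add_sub_measure_univ_nonneg
    (hμν.trans (absolutelyContinuous_tilted hgν))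
    (integrable_llr_tilted_right hμν hgμ h_int hgν)
  rw [integral_llr_tilted_right hμν hgμ hgν h_int] at gibbs
  simp only [probReal_univ] at gibbs
  linarith

end MeasureTheory

theorem federated_elbo_decomposition_general {Θ : Type*} [MeasurableSpace Θ]
    (π q : Measure Θ) [IsProbabilityMeasure π] [IsProbabilityMeasure q]
    (hac : q ≪ π) (hkl : Integrable (llr q π) q)
    (m : ℕ) (hm : 1 ≤ m) (f : Fin m → Θ → ℝ)
    (hpos : ∀ s θ, 0 < f s θ)
    (hint : Integrable (fun θ => ∏ s, f s θ) π)
    (hlog : ∀ s, Integrable (fun θ => Real.log (f s θ)) q) :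
    Real.log (∫ θ, ∏ s, f s θ ∂π)
      ≥ ∑ s, (∫ θ, Real.log (f s θ) ∂q - (1 / (m : ℝ)) * ∫ θ, llr q π θ ∂q) := by
  have hexp : (fun θ ↦ Real.exp (∑ s, Real.log (f s θ))) = fun θ ↦ ∏ s, f s θ := by
    ext θ
    rw [Real.exp_sum]
    exact Finset.prod_congr rfl fun s _ ↦ Real.exp_log (hpos s θ)
  have hsum : ∑ s, (∫ θ, Real.log (f s θ) ∂q - (1 / (m : ℝ)) * ∫ θ, llr q π θ ∂q)
      = ∫ θ, ∑ s, Real.log (f s θ) ∂q - ∫ θ, llr q π θ ∂q := by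
    have hm₀ : (m : ℝ) ≠ 0 := Nat.cast_ne_zero.mpr (Nat.one_le_iff_ne_zero.mp hm)
    rw [integral_finsetSum _ fun s _ ↦ hlog s, Finset.sum_sub_distrib, Finset.sum_const,
      Finset.card_univ, Fintype.card_fin, nsmul_eq_mul, ← mul_assoc, mul_one_div_cancel hm₀,
      one_mul]
  rw [ge_iff_le, hsum, ← hexp]
  exact integral_sub_integral_llr_le_log_integral_exp hac hkl
    (integrable_finsetSum _ fun s _ ↦ hlog s) (hexp ▸ hint)

/-- The federated ELBO decomposition of FedCI (Eq. (21), Appendix B): if `q ≪ π` with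
finite Kullback–Leibler divergence `KL(q‖π) = ∫ llr q π dq`, and `f_1, …, f_m` are positive
measurable functions with `∏ f_s` integrable w.r.t. `π` and each `log f_s` integrable w.r.t. `q`,
then `log ∫ ∏ f_s dπ ≥ Σ_s (∫ log f_s dq − (1/m) KL(q‖π))`. -/
theorem federated_elbo_decomposition {Θ : Type*} [MeasurableSpace Θ]
    (π q : Measure Θ) [IsProbabilityMeasure π] [IsProbabilityMeasure q]
    (hac : q ≪ π) (hkl : Integrable (llr q π) q)
    (m : ℕ) (hm : 1 ≤ m) (f : Fin m → Θ → ℝ)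
    (hmeas : ∀ s, Measurable (f s)) (hpos : ∀ s θ, 0 < f s θ)
    (hint : Integrable (fun θ => ∏ s, f s θ) π)
    (hlog : ∀ s, Integrable (fun θ => Real.log (f s θ)) q) :
    Real.log (∫ θ, ∏ s, f s θ ∂π)
      ≥ ∑ s, (∫ θ, Real.log (f s θ) ∂q - (1 / (m : ℝ)) * ∫ θ, llr q π θ ∂q) :=
  federated_elbo_decomposition_general π q hac hkl m hm f hpos hint hlog
end

section
/- Let σ(x) := (1 + exp(−x))⁻¹ denote the logistic sigmoid. Then for all a, b ∈ ℝ: σ(a) · log(σ(a)/σ(b)) + σ(−a) · log(σ(−a)/σ(−b)) ≤ 2|a − b|. Equivalently (since σ(−x) = 1 − σ(x)), the Kullback–Leibler divergence between the Bernoulli distributions with success probabilities σ(a) and σ(b) is at most 2|a − b|. -/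
/-! `log ∘ σ` is 1-Lipschitz, so both log-ratios are at most `|a - b|`; since
`σ(a) + σ(-a) = 1`, their weighted sum is too, which is even a factor 2 better. -/

namespace Real

lemma one_add_exp_neg_le_exp_abs_sub_mul (a b : ℝ) :
    1 + exp (-b) ≤ exp |a - b| * (1 + exp (-a)) := by
  have h_one : 1 ≤ exp |a - b| := one_le_exp (abs_nonneg _)
  have h_exp : exp (-b) ≤ exp |a - b| * exp (-a) := by
    rw [← exp_add]
    exact exp_le_exp.2 (by linarith [le_abs_self (a - b)])
  linarith [mul_add (exp |a - b|) 1 (exp (-a))]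

lemma log_sigmoid_div_sigmoid_le (a b : ℝ) : log (sigmoid a / sigmoid b) ≤ |a - b| := by
  rw [sigmoid_def, sigmoid_def, inv_div_inv, log_le_iff_le_exp (by positivity),
    div_le_iff₀ (by positivity)]
  exact one_add_exp_neg_le_exp_abs_sub_mul a b

lemma sigmoid_mul_log_add_sigmoid_neg_mul_log_le (a b : ℝ) :
    sigmoid a * log (sigmoid a / sigmoid b)
      + sigmoid (-a) * log (sigmoid (-a) / sigmoid (-b)) ≤ |a - b| := by
  have h_neg : log (sigmoid (-a) / sigmoid (-b)) ≤ |a - b| := by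
    simpa only [neg_sub_neg, abs_sub_comm] using log_sigmoid_div_sigmoid_le (-a) (-b)
  calc sigmoid a * log (sigmoid a / sigmoid b)
        + sigmoid (-a) * log (sigmoid (-a) / sigmoid (-b))
      ≤ sigmoid a * |a - b| + sigmoid (-a) * |a - b| := by
        gcongr
        · exact sigmoid_nonneg a
        · exact log_sigmoid_div_sigmoid_le a b
        · exact sigmoid_nonneg (-a)
    _ = |a - b| := by rw [sigmoid_neg]; ring

end Real

/-- With `σ(x) = (1 + exp(−x))⁻¹` the logistic sigmoid, the Kullback–Leibler divergence
between `Bernoulli(σ(a))` and `Bernoulli(σ(b))` is at most `2|a − b|`: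
`σ(a) log(σ(a)/σ(b)) + σ(−a) log(σ(−a)/σ(−b)) ≤ 2|a − b|`
(the core estimate on `D_KL[p(w|z) ‖ p(w|z')]` in Lemmas 3 and 4(i) of CausalRFF). -/
theorem sigmoid_bernoulli_kl_le (a b : ℝ) :
    (1 + Real.exp (-a))⁻¹ * Real.log ((1 + Real.exp (-a))⁻¹ / (1 + Real.exp (-b))⁻¹)
      + (1 + Real.exp (-(-a)))⁻¹ * Real.log ((1 + Real.exp (-(-a)))⁻¹ / (1 + Real.exp (-(-b)))⁻¹)
      ≤ 2 * |a - b| :=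
  (Real.sigmoid_mul_log_add_sigmoid_neg_mul_log_le a b).trans
    (le_mul_of_one_le_left (abs_nonneg _) one_le_two)
end

section
/- Let Z and Y be measurable spaces with Y standard Borel, let π be a probability measure on Z, and let κ and η be Markov kernels from Z to Y. Then KL(κ ∘ₘ π ‖ η ∘ₘ π) ≤ ∫_Z ∫_Z KL(κ(z) ‖ η(z')) dπ(z') dπ(z), where κ ∘ₘ π denotes the mixture probability measure A ↦ ∫_Z κ(z)(A) dπ(z). -/
open MeasureTheory ProbabilityTheory
open scoped ENNReal Classical

/-- The Kullback–Leibler divergence, valued in `[0, ∞]`: equal to `∫ log(dμ/dν) dμ`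
when `μ ≪ ν` and this integral exists, and `+∞` otherwise. -/

noncomputable def klDiv' {α : Type*} [MeasurableSpace α] (μ ν : Measure α) : ℝ≥0∞ :=
  if μ ≪ ν ∧ Integrable (llr μ ν) μ then ENNReal.ofReal (∫ x, llr μ ν x ∂μ) else ⊤

namespace KLAux

/-- `x log x - x + 1 ≥ 0` for `x ≥ 0`. -/
lemma g_nonneg {x : ℝ} (hx : 0 ≤ x) : 0 ≤ x * Real.log x - x + 1 := by
  rcases eq_or_lt_of_le hx with h | h
  · simp [← h]
  · have h5 : -Real.log x ≤ x⁻¹ - 1 := by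
      have := Real.log_le_sub_one_of_pos (inv_pos.2 h)
      rwa [Real.log_inv] at this
    have h6 := mul_le_mul_of_nonneg_left h5 h.le
    have h7 : x * (x⁻¹ - 1) = 1 - x := by field_simp
    nlinarith [h6, h7]

/-- `a log(a/b) - a + b ≥ 0` for `a ≥ 0`, `b > 0`. -/
lemma f_nonneg {a b : ℝ} (ha : 0 ≤ a) (hb : 0 < b) :
    0 ≤ a * Real.log a - a * Real.log b - a + b := by
  rcases eq_or_lt_of_le ha with h | h
  · simp [← h]; positivity
  · have h1 : 0 ≤ (a / b) * Real.log (a / b) - a / b + 1 := g_nonneg (by positivity)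
    have h2 : Real.log (a / b) = Real.log a - Real.log b := Real.log_div h.ne' hb.ne'
    have h3 : 0 ≤ b * ((a / b) * Real.log (a / b) - a / b + 1) :=
      mul_nonneg hb.le h1
    have h4 : b * (a / b) = a := by field_simp
    calc (0:ℝ) ≤ b * ((a / b) * Real.log (a / b) - a / b + 1) := h3
      _ = a * Real.log a - a * Real.log b - a + b := by
          rw [h2]; field_simp

/-- Tangent-line bound: `t a - (e^t - 1) b ≤ a log a - a log b - a + b` for `a ≥ 0`, `b > 0`. -/
lemma key_real (t : ℝ) {a b : ℝ} (ha : 0 ≤ a) (hb : 0 < b) :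
    t * a - (Real.exp t - 1) * b ≤ a * Real.log a - a * Real.log b - a + b := by
  have hB : 0 < b * Real.exp t := mul_pos hb (Real.exp_pos t)
  have h1 : 0 ≤ a * Real.log a - a * Real.log (b * Real.exp t) - a + b * Real.exp t :=
    f_nonneg ha hB
  have h2 : Real.log (b * Real.exp t) = Real.log b + t := by
    rw [Real.log_mul hb.ne' (Real.exp_pos t).ne', Real.log_exp]
  nlinarith [h1, h2]

noncomputable def gE (x : ℝ≥0∞) : ℝ≥0∞ :=
  if x = ⊤ then ⊤ else ENNReal.ofReal (x.toReal * Real.log x.toReal - x.toReal + 1)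

noncomputable def fE (a b : ℝ≥0∞) : ℝ≥0∞ :=
  if a = 0 then b else if b = 0 ∨ a = ⊤ ∨ b = ⊤ then ⊤
  else ENNReal.ofReal
    (a.toReal * Real.log a.toReal - a.toReal * Real.log b.toReal - a.toReal + b.toReal)

lemma gE_zero : gE 0 = 1 := by simp [gE]

lemma fE_zero_left (b : ℝ≥0∞) : fE 0 b = b := by simp [fE]

lemma measurable_gE : Measurable gE := by
  unfold gE
  refine Measurable.ite (measurable_id (measurableSet_singleton _)) measurable_const ?_
  exact ((((ENNReal.measurable_toReal.mul
    (Real.measurable_log.comp ENNReal.measurable_toReal)).sub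
    ENNReal.measurable_toReal).add measurable_const)).ennreal_ofReal

lemma measurable_fE : Measurable (Function.uncurry fE) := by
  unfold fE Function.uncurry
  refine Measurable.ite ?_ measurable_snd ?_
  · exact measurable_fst (measurableSet_singleton _)
  refine Measurable.ite ?_ measurable_const ?_
  · refine MeasurableSet.union (measurable_snd (measurableSet_singleton _))
      (MeasurableSet.union (measurable_fst (measurableSet_singleton _))
        (measurable_snd (measurableSet_singleton _)))
  · have h1 : Measurable fun p : ℝ≥0∞ × ℝ≥0∞ => p.1.toReal :=
      ENNReal.measurable_toReal.comp measurable_fst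
    have h2 : Measurable fun p : ℝ≥0∞ × ℝ≥0∞ => p.2.toReal :=
      ENNReal.measurable_toReal.comp measurable_snd
    exact ((((h1.mul (Real.measurable_log.comp h1)).sub
      (h1.mul (Real.measurable_log.comp h2))).sub h1).add h2).ennreal_ofReal


lemma fE_one (a : ℝ≥0∞) : fE a 1 = gE a := by
  rcases eq_or_ne a 0 with rfl | ha0
  · simp [fE, gE]
  rcases eq_or_ne a ⊤ with rfl | hat
  · simp [fE, gE]
  · simp [fE, gE, ha0, hat]

/-- `fE (q * r) q = q * gE r` for `q ≠ ⊤`. -/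
lemma fE_mul {q r : ℝ≥0∞} (hq : q ≠ ⊤) : fE (q * r) q = q * gE r := by
  rcases eq_or_ne q 0 with rfl | hq0
  · simp [fE]
  rcases eq_or_ne r 0 with rfl | hr0
  · simp [fE, gE, hq0, hq]
  rcases eq_or_ne r ⊤ with rfl | hrt
  · rw [ENNReal.mul_top hq0]
    simp [fE, gE, hq0, hq, ENNReal.top_mul hq0]
  · have hqr0 : q * r ≠ 0 := by simp [hq0, hr0]
    have hqrt : q * r ≠ ⊤ := ENNReal.mul_ne_top hq hrt
    rw [fE, gE, if_neg hqr0, if_neg (by simp [hq0, hq, hqrt]), if_neg hrt]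
    have hq' : 0 < q.toReal := ENNReal.toReal_pos hq0 hq
    have hr' : 0 < r.toReal := ENNReal.toReal_pos hr0 hrt
    conv_rhs => rw [← ENNReal.ofReal_toReal hq]
    rw [← ENNReal.ofReal_mul ENNReal.toReal_nonneg, ENNReal.toReal_mul]
    congr 1
    rw [Real.log_mul hq'.ne' hr'.ne']
    ring

/-- `gE a ≤ fE a b + (1 - b)` when `b ≤ 1`. -/
lemma gE_le_fE_add {a b : ℝ≥0∞} (hb1 : b ≤ 1) : gE a ≤ fE a b + (1 - b) := by
  have hbt : b ≠ ⊤ := (hb1.trans_lt ENNReal.one_lt_top).ne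
  rcases eq_or_ne a 0 with rfl | ha0
  · rw [gE_zero, fE_zero_left, add_tsub_cancel_of_le hb1]
  rcases eq_or_ne a ⊤ with rfl | hat
  · simp [fE, ha0]
  rcases eq_or_ne b 0 with rfl | hb0
  · simp [fE, ha0, hat]
  · rw [gE, if_neg hat, fE, if_neg ha0, if_neg (by simp [hb0, hat, hbt])]
    have hb' : 0 < b.toReal := ENNReal.toReal_pos hb0 hbt
    have hb'1 : b.toReal ≤ 1 := by
      simpa using (ENNReal.toReal_mono (by simp) hb1)
    have h1mb : 1 - b = ENNReal.ofReal (1 - b.toReal) := by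
      rw [ENNReal.ofReal_sub _ ENNReal.toReal_nonneg, ENNReal.ofReal_one,
        ENNReal.ofReal_toReal hbt]
    rw [h1mb]
    refine le_trans ?_ (ENNReal.ofReal_add_le)
    refine ENNReal.ofReal_le_ofReal ?_
    have hlog : Real.log b.toReal ≤ 0 := Real.log_nonpos hb'.le hb'1
    nlinarith [mul_nonneg (ENNReal.toReal_nonneg (a := a)) (neg_nonneg.2 hlog)]

/-- The tangent-line bound, in `ℝ≥0∞`. -/
lemma le_fE (t : ℝ) (a b : ℝ≥0∞) :
    ENNReal.ofReal (t * a.toReal - (Real.exp t - 1) * b.toReal) ≤ fE a b := by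
  rcases eq_or_ne a ⊤ with rfl | hat
  · rcases eq_or_ne b 0 with rfl | hb0
    · simp [fE]
    · simp [fE, hb0]
  rcases eq_or_ne b ⊤ with rfl | hbt
  · rcases eq_or_ne a 0 with rfl | ha0
    · simp [fE]
    · simp [fE, ha0]
  rcases eq_or_ne b 0 with rfl | hb0
  · rcases eq_or_ne a 0 with rfl | ha0
    · simp [fE]
    · simp [fE, ha0, hat]
  have hb' : 0 < b.toReal := ENNReal.toReal_pos hb0 hbt
  rcases eq_or_ne a 0 with rfl | ha0
  · rw [fE_zero_left]
    refine le_trans (le_trans (ENNReal.ofReal_le_ofReal ?_) ENNReal.ofReal_toReal_le) le_rfl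
    have := Real.exp_pos t
    simp only [ENNReal.toReal_zero, mul_zero, zero_sub]
    nlinarith [mul_pos this hb']
  · rw [fE, if_neg ha0, if_neg (by simp [hb0, hat, hbt])]
    exact ENNReal.ofReal_le_ofReal (key_real t ENNReal.toReal_nonneg hb')


variable {W : Type*} [MeasurableSpace W]

lemma ofReal_max_zero (x : ℝ) : ENNReal.ofReal (max x 0) = ENNReal.ofReal x := by
  rcases le_total x 0 with h | h
  · rw [max_eq_right h, ENNReal.ofReal_zero, ENNReal.ofReal_eq_zero.2 h]
  · rw [max_eq_left h]

lemma ofReal_integral_le {m : Measure W} {F : W → ℝ} (hF : Integrable F m) :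
    ENNReal.ofReal (∫ w, F w ∂m) ≤ ∫⁻ w, ENNReal.ofReal (F w) ∂m := by
  have h1 : ∫ w, F w ∂m ≤ ∫ w, max (F w) 0 ∂m :=
    integral_mono hF hF.pos_part (fun w => le_max_left _ _)
  calc ENNReal.ofReal (∫ w, F w ∂m) ≤ ENNReal.ofReal (∫ w, max (F w) 0 ∂m) :=
        ENNReal.ofReal_le_ofReal h1
    _ = ∫⁻ w, ENNReal.ofReal (max (F w) 0) ∂m :=
        ofReal_integral_eq_lintegral_ofReal hF.pos_part
          (Filter.Eventually.of_forall fun w => le_max_right _ _)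
    _ = ∫⁻ w, ENNReal.ofReal (F w) ∂m := by simp_rw [ofReal_max_zero]

lemma lin_jensen (m : Measure W) [IsProbabilityMeasure m] {φ ψ : W → ℝ≥0∞}
    (hφ : AEMeasurable φ m) (hψ : AEMeasurable ψ m)
    (hφt : ∫⁻ w, φ w ∂m ≠ ⊤) (hψt : ∫⁻ w, ψ w ∂m ≠ ⊤) (u v : ℝ) :
    ENNReal.ofReal (u * (∫⁻ w, φ w ∂m).toReal + v * (∫⁻ w, ψ w ∂m).toReal)
      ≤ ∫⁻ w, ENNReal.ofReal (u * (φ w).toReal + v * (ψ w).toReal) ∂m := by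
  have hφi : Integrable (fun w => (φ w).toReal) m :=
    integrable_toReal_of_lintegral_ne_top hφ hφt
  have hψi : Integrable (fun w => (ψ w).toReal) m :=
    integrable_toReal_of_lintegral_ne_top hψ hψt
  have hF : Integrable (fun w => u * (φ w).toReal + v * (ψ w).toReal) m :=
    (hφi.const_mul u).add (hψi.const_mul v)
  have h1 : ∫ w, (u * (φ w).toReal + v * (ψ w).toReal) ∂m
      = u * (∫⁻ w, φ w ∂m).toReal + v * (∫⁻ w, ψ w ∂m).toReal := by
    rw [integral_add (hφi.const_mul u) (hψi.const_mul v), integral_const_mul,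
      integral_const_mul, integral_toReal hφ (ae_lt_top' hφ hφt),
      integral_toReal hψ (ae_lt_top' hψ hψt)]
  calc ENNReal.ofReal (u * (∫⁻ w, φ w ∂m).toReal + v * (∫⁻ w, ψ w ∂m).toReal)
      = ENNReal.ofReal (∫ w, (u * (φ w).toReal + v * (ψ w).toReal) ∂m) := by rw [h1]
    _ ≤ _ := ofReal_integral_le hF

/-- Jensen-type inequality for the jointly convex function `fE`, with independent mixtures. -/
lemma jensen_fE (m : Measure W) [IsProbabilityMeasure m]
    {a b : W → ℝ≥0∞} (ha : Measurable a) (hb : Measurable b)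
    (hAt : ∫⁻ z, a z ∂m ≠ ⊤) (hBt : ∫⁻ z, b z ∂m ≠ ⊤) :
    fE (∫⁻ z, a z ∂m) (∫⁻ z, b z ∂m) ≤ ∫⁻ z, ∫⁻ z', fE (a z) (b z') ∂m ∂m := by
  set A := ∫⁻ z, a z ∂m with hA_def
  set B := ∫⁻ z, b z ∂m with hB_def
  rcases eq_or_ne A 0 with hA0 | hA0
  · have ha0 : a =ᵐ[m] 0 := (lintegral_eq_zero_iff ha).mp hA0
    rw [hA0, fE_zero_left]
    have : ∫⁻ z, ∫⁻ z', fE (a z) (b z') ∂m ∂m = ∫⁻ (_ : W), B ∂m := by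
      refine lintegral_congr_ae ?_
      filter_upwards [ha0] with z hz
      simp only [Pi.zero_apply] at hz
      simp_rw [hz, fE_zero_left]; rfl
    rw [this, lintegral_const, measure_univ, mul_one]
  rcases eq_or_ne B 0 with hB0 | hB0
  · have hb0 : b =ᵐ[m] 0 := (lintegral_eq_zero_iff hb).mp hB0
    have hfE : fE A 0 = ⊤ := by rw [fE, if_neg hA0]; simp
    rw [hB0, hfE, top_le_iff]
    have hR : ∫⁻ z, ∫⁻ z', fE (a z) (b z') ∂m ∂m
        = ∫⁻ z, (if a z = 0 then 0 else ⊤) ∂m := by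
      refine lintegral_congr fun z => ?_
      have h1 : ∫⁻ z', fE (a z) (b z') ∂m = ∫⁻ _, fE (a z) 0 ∂m := by
        refine lintegral_congr_ae ?_
        filter_upwards [hb0] with z' h
        simp only [Pi.zero_apply] at h
        rw [h]
      rw [h1, lintegral_const, measure_univ, mul_one]
      split_ifs with h
      · rw [h, fE_zero_left]
      · rw [fE, if_neg h]; simp
    rw [hR]
    by_contra hne
    have hmeas : Measurable fun z => (if a z = 0 then 0 else ⊤ : ℝ≥0∞) :=
      Measurable.ite (ha (measurableSet_singleton 0)) measurable_const measurable_const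
    have hlt := ae_lt_top hmeas hne
    have ha0 : a =ᵐ[m] 0 := by
      filter_upwards [hlt] with z hz
      simp only [Pi.zero_apply]
      by_contra h0
      simp [h0] at hz
    exact hA0 ((lintegral_eq_zero_iff ha).mpr ha0)
  -- main case: 0 < A, B < ⊤
  have hA' : 0 < A.toReal := ENNReal.toReal_pos hA0 hAt
  have hB' : 0 < B.toReal := ENNReal.toReal_pos hB0 hBt
  set t := Real.log (A.toReal / B.toReal) with ht_def
  have hexp : Real.exp t = A.toReal / B.toReal := Real.exp_log (by positivity)
  have hval : fE A B = ENNReal.ofReal (t * A.toReal + -(Real.exp t - 1) * B.toReal) := by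
    rw [fE, if_neg hA0, if_neg (by simp [hB0, hAt, hBt])]
    congr 1
    rw [hexp, ht_def, Real.log_div hA'.ne' hB'.ne']
    field_simp
    ring
  rw [hval]
  have hstep1 : ∀ᵐ z ∂m, ENNReal.ofReal (t * (a z).toReal + -(Real.exp t - 1) * B.toReal)
      ≤ ∫⁻ z', fE (a z) (b z') ∂m := by
    filter_upwards [ae_lt_top ha hAt] with z hz
    have hconst : ∫⁻ _, a z ∂m = a z := by
      rw [lintegral_const, measure_univ, mul_one]
    have h := lin_jensen m (aemeasurable_const (b := a z)) hb.aemeasurable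
      (by rw [hconst]; exact hz.ne) hBt t (-(Real.exp t - 1))
    rw [hconst] at h
    refine h.trans ?_
    refine lintegral_mono fun z' => ?_
    refine le_trans (le_of_eq ?_) (le_fE t (a z) (b z'))
    congr 1
    ring
  calc ENNReal.ofReal (t * A.toReal + -(Real.exp t - 1) * B.toReal)
      ≤ ∫⁻ z, ENNReal.ofReal (t * (a z).toReal + -(Real.exp t - 1) * B.toReal) ∂m := by
        have hconst : ∫⁻ _, B ∂m = B := by rw [lintegral_const, measure_univ, mul_one]
        have h := lin_jensen m ha.aemeasurable (aemeasurable_const (b := B))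
          hAt (by rw [hconst]; exact hBt) t (-(Real.exp t - 1))
        rw [hconst] at h
        exact h
    _ ≤ ∫⁻ z, ∫⁻ z', fE (a z) (b z') ∂m ∂m := lintegral_mono_ae hstep1


lemma kl_eq {Y : Type*} [MeasurableSpace Y] (μ ν : Measure Y)
    [IsProbabilityMeasure μ] [IsProbabilityMeasure ν] (h : μ ≪ ν) :
    klDiv' μ ν = ∫⁻ y, gE (μ.rnDeriv ν y) ∂ν := by
  set r := μ.rnDeriv ν with hr_def
  have hrm : Measurable r := Measure.measurable_rnDeriv μ ν
  have hrlt : ∀ᵐ y ∂ν, r y < ⊤ := Measure.rnDeriv_lt_top μ ν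
  set φ : Y → ℝ := fun y => (r y).toReal * Real.log (r y).toReal - (r y).toReal + 1
    with hφ_def
  have hφm : Measurable φ :=
    ((hrm.ennreal_toReal.mul (Real.measurable_log.comp hrm.ennreal_toReal)).sub
      hrm.ennreal_toReal).add measurable_const
  have hφ0 : ∀ y, 0 ≤ φ y := fun y => g_nonneg ENNReal.toReal_nonneg
  have hgint : ∫⁻ y, gE (r y) ∂ν = ∫⁻ y, ENNReal.ofReal (φ y) ∂ν := by
    refine lintegral_congr_ae ?_
    filter_upwards [hrlt] with y hy
    rw [gE, if_neg hy.ne]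
  have hμ : μ = ν.withDensity r := (Measure.withDensity_rnDeriv_eq μ ν h).symm
  have hr_ae : r =ᵐ[ν] fun y => ((r y).toNNReal : ℝ≥0∞) := by
    filter_upwards [hrlt] with y hy
    rw [ENNReal.coe_toNNReal hy.ne]
  have hμ' : μ = ν.withDensity fun y => ((r y).toNNReal : ℝ≥0∞) := by
    rw [hμ]; exact withDensity_congr_ae hr_ae
  have hfnn : AEMeasurable (fun y => (r y).toNNReal) ν :=
    (hrm.ennreal_toNNReal).aemeasurable
  have hr'int : Integrable (fun y => (r y).toReal) ν := Measure.integrable_toReal_rnDeriv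
  have hint_iff : Integrable (llr μ ν) μ ↔
      Integrable (fun y => (r y).toReal * Real.log (r y).toReal) ν := by
    have hllr : llr μ ν = fun y => Real.log (r y).toReal := rfl
    rw [hllr]
    conv_lhs => rw [hμ']
    rw [integrable_withDensity_iff_integrable_smul₀ hfnn]
    constructor <;> intro hh <;>
      exact hh.congr (Filter.Eventually.of_forall fun y => by
        simp [NNReal.smul_def, ENNReal.toReal])
  by_cases hint : Integrable (llr μ ν) μ
  · have h1 : klDiv' μ ν = ENNReal.ofReal (∫ y, llr μ ν y ∂μ) := if_pos ⟨h, hint⟩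
    have hmul_int : Integrable (fun y => (r y).toReal * Real.log (r y).toReal) ν :=
      hint_iff.mp hint
    have h2 : ∫ y, llr μ ν y ∂μ = ∫ y, (r y).toReal * Real.log (r y).toReal ∂ν := by
      have hllr : ∫ y, llr μ ν y ∂μ = ∫ y, Real.log (r y).toReal ∂μ := rfl
      rw [hllr]
      conv_lhs => rw [hμ']
      rw [integral_withDensity_eq_integral_smul₀ hfnn]
      refine integral_congr_ae (Filter.Eventually.of_forall fun y => ?_)
      simp [NNReal.smul_def, ENNReal.toReal]
    have hsub : Integrable (fun y => (r y).toReal * Real.log (r y).toReal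
        - (r y).toReal) ν := hmul_int.sub hr'int
    have h3 : Integrable φ ν := hsub.add (integrable_const 1)
    have h4 : ∫ y, φ y ∂ν = ∫ y, llr μ ν y ∂μ := by
      have e1 : ∫ y, φ y ∂ν
          = ∫ y, ((r y).toReal * Real.log (r y).toReal - (r y).toReal) ∂ν
            + ∫ _, (1 : ℝ) ∂ν := by
        rw [← integral_add hsub (integrable_const 1)]
      rw [e1, integral_sub hmul_int hr'int, Measure.integral_toReal_rnDeriv h, h2]
      simp only [integral_const, measure_univ, probReal_univ, ENNReal.toReal_one, smul_eq_mul,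
        one_mul, mul_one]
      ring
    rw [h1, hgint, ← h4,
      ofReal_integral_eq_lintegral_ofReal h3 (Filter.Eventually.of_forall hφ0)]
  · have h1 : klDiv' μ ν = ⊤ := if_neg (by tauto)
    rw [h1, hgint]
    by_contra hne
    have hne' : ∫⁻ y, ENNReal.ofReal (φ y) ∂ν ≠ ⊤ := fun hh => hne (hh ▸ rfl)
    have hφi : Integrable φ ν := by
      have h5 := integrable_toReal_of_lintegral_ne_top
        (hφm.ennreal_ofReal).aemeasurable hne'
      exact h5.congr (Filter.Eventually.of_forall fun y =>
        ENNReal.toReal_ofReal (hφ0 y))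
    have hmul_int : Integrable (fun y => (r y).toReal * Real.log (r y).toReal) ν := by
      have h6 := (hφi.sub (integrable_const 1)).add hr'int
      exact h6.congr (Filter.Eventually.of_forall fun y => by simp only [hφ_def, Pi.sub_apply, Pi.add_apply]; ring)
    exact hint (hint_iff.mpr hmul_int)


/-- Per-pair lower bound for `klDiv'` via densities w.r.t. a common reference measure. -/
lemma kl_ge {Y : Type*} [MeasurableSpace Y] (μ ν ξ : Measure Y)
    [IsProbabilityMeasure μ] [IsProbabilityMeasure ν] [IsProbabilityMeasure ξ]
    (hμν : μ ≪ ν) (hμξ : μ ≪ ξ) :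
    (∫⁻ y, fE (μ.rnDeriv ξ y) (ν.rnDeriv ξ y) ∂ξ) + (1 - ∫⁻ y, ν.rnDeriv ξ y ∂ξ)
      ≤ klDiv' μ ν := by
  rw [kl_eq μ ν hμν]
  set r := μ.rnDeriv ν with hr_def
  set q := ν.rnDeriv ξ with hq_def
  set p := μ.rnDeriv ξ with hp_def
  have hrm : Measurable r := Measure.measurable_rnDeriv μ ν
  have hqm : Measurable q := Measure.measurable_rnDeriv ν ξ
  have hdec : ν = ν.singularPart ξ + ξ.withDensity q := ν.haveLebesgueDecomposition_add ξ
  obtain ⟨S, hSm, hS1, hS2⟩ := Measure.mutuallySingular_singularPart ν ξ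
  have hμS : μ Sᶜ = 0 := hμξ hS2
  have hr0' : ∫⁻ y in Sᶜ, r y ∂ν = 0 :=
    le_antisymm (le_trans (Measure.setLIntegral_rnDeriv_le Sᶜ) hμS.le) zero_le
  have hr0'' : ∀ᵐ y ∂ν, y ∈ Sᶜ → r y = 0 := by
    have := (lintegral_eq_zero_iff hrm).mp hr0'
    exact (ae_restrict_iff' hSm.compl).mp this
  have hr0 : r =ᵐ[ν.singularPart ξ] 0 := by
    have hT : MeasurableSet {y | r y ≠ 0} := (hrm (measurableSet_singleton 0)).compl
    have hνnull : ν ({y | r y ≠ 0} ∩ Sᶜ) = 0 := by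
      have h5 := hr0''
      rw [Filter.eventually_iff, mem_ae_iff] at h5
      refine measure_mono_null ?_ h5
      intro y hy
      simp only [Set.mem_compl_iff, Set.mem_setOf_eq]
      intro himp
      exact hy.1 (himp hy.2)
    have hle : ν.singularPart ξ ≤ ν := Measure.singularPart_le ν ξ
    have h7 : (ν.singularPart ξ) {y | r y ≠ 0} = 0 := by
      have hsplit : {y | r y ≠ 0} ⊆ ({y | r y ≠ 0} ∩ Sᶜ) ∪ S := by
        intro y hy
        by_cases hyS : y ∈ S
        · exact Or.inr hyS
        · exact Or.inl ⟨hy, hyS⟩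
      refine le_antisymm (le_trans (measure_mono hsplit) ?_) zero_le
      refine le_trans (measure_union_le _ _) ?_
      have h8 : (ν.singularPart ξ) ({y | r y ≠ 0} ∩ Sᶜ) = 0 :=
        le_antisymm (le_trans (Measure.le_iff'.mp hle _) hνnull.le) zero_le
      rw [h8, hS1, add_zero]
    rw [Filter.EventuallyEq, ae_iff]
    simpa using h7
  have hqle : ∫⁻ y, q y ∂ξ ≤ 1 := by
    have h9 : ξ.withDensity q ≤ ν := Measure.withDensity_rnDeriv_le ν ξ
    calc ∫⁻ y, q y ∂ξ = (ξ.withDensity q) Set.univ := by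
          rw [withDensity_apply _ MeasurableSet.univ, Measure.restrict_univ]
      _ ≤ ν Set.univ := Measure.le_iff'.mp h9 _
      _ = 1 := measure_univ
  have step1 : ∫⁻ y, gE (r y) ∂ν
      = ∫⁻ y, gE (r y) ∂(ν.singularPart ξ) + ∫⁻ y, gE (r y) ∂(ξ.withDensity q) := by
    conv_lhs => rw [hdec]
    rw [lintegral_add_measure]
  have step2 : ∫⁻ y, gE (r y) ∂(ν.singularPart ξ) = 1 - ∫⁻ y, q y ∂ξ := by
    have e1 : ∫⁻ y, gE (r y) ∂(ν.singularPart ξ) = ∫⁻ _, 1 ∂(ν.singularPart ξ) := by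
      refine lintegral_congr_ae ?_
      filter_upwards [hr0] with y hy
      simp only [Pi.zero_apply] at hy
      rw [hy, gE_zero]
    rw [e1, lintegral_one]
    have e2 : (ν.singularPart ξ) Set.univ + ∫⁻ y, q y ∂ξ = 1 := by
      have e3 := congrArg (fun m : Measure Y => m Set.univ) hdec
      simp only [Measure.coe_add, Pi.add_apply] at e3
      rw [withDensity_apply _ MeasurableSet.univ, Measure.restrict_univ, measure_univ] at e3
      exact e3.symm
    exact ENNReal.eq_sub_of_add_eq (hqle.trans_lt ENNReal.one_lt_top).ne e2
  have hqlt : ∀ᵐ y ∂ξ, q y < ⊤ := Measure.rnDeriv_lt_top ν ξ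
  have hμrep : μ = ξ.withDensity (fun y => q y * r y) := by
    have h1 : μ = ν.withDensity r := (Measure.withDensity_rnDeriv_eq μ ν hμν).symm
    rw [h1]
    conv_lhs => rw [hdec]
    rw [withDensity_add_measure]
    have h2 : (ν.singularPart ξ).withDensity r = 0 := by
      rw [withDensity_congr_ae hr0, withDensity_zero]
    rw [h2, zero_add, ← withDensity_mul _ hqm hrm]
    rfl
  have hpq : p =ᵐ[ξ] fun y => q y * r y := by
    have h10 := Measure.rnDeriv_withDensity ξ (hqm.mul hrm)
    rw [hp_def, hμrep]
    exact h10
  have step3 : ∫⁻ y, gE (r y) ∂(ξ.withDensity q) = ∫⁻ y, fE (p y) (q y) ∂ξ := by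
    have hgEr : Measurable fun y => gE (r y) := measurable_gE.comp hrm
    rw [lintegral_withDensity_eq_lintegral_mul _ hqm hgEr]
    refine lintegral_congr_ae ?_
    filter_upwards [hpq, hqlt] with y h1 h2
    simp only [Pi.mul_apply, Function.comp_apply]
    rw [h1]
    exact (fE_mul h2.ne).symm
  rw [step1, step2, step3, add_comm]

end KLAux

open KLAux

/-- The mixture-KL inequality at the start of the proof of Lemma 3 of CausalRFF:
for Markov kernels `κ, η : Z → Y` and a prior `π`,
`KL(κ ∘ₘ π ‖ η ∘ₘ π) ≤ ∫∫ KL(κ(z) ‖ η(z')) dπ(z') dπ(z)`. -/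
theorem klDiv_mixture_le {Z Y : Type*} [MeasurableSpace Z] [MeasurableSpace Y]
    [StandardBorelSpace Y] (π : Measure Z) [IsProbabilityMeasure π]
    (κ η : Kernel Z Y) [IsMarkovKernel κ] [IsMarkovKernel η] :
    klDiv' (π.bind fun z => κ z) (π.bind fun z => η z)
      ≤ ∫⁻ z, ∫⁻ z', klDiv' (κ z) (η z') ∂π ∂π := by
  classical
  set μb := π.bind fun z => κ z with hμb_def
  set νb := π.bind fun z => η z with hνb_def
  have hμb_apply : ∀ s, MeasurableSet s → μb s = ∫⁻ z, κ z s ∂π :=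
    fun s hs => Measure.bind_apply hs κ.measurable.aemeasurable
  have hνb_apply : ∀ s, MeasurableSet s → νb s = ∫⁻ z, η z s ∂π :=
    fun s hs => Measure.bind_apply hs η.measurable.aemeasurable
  haveI hμbP : IsProbabilityMeasure μb := ⟨by rw [hμb_apply _ MeasurableSet.univ]; simp⟩
  haveI hνbP : IsProbabilityMeasure νb := ⟨by rw [hνb_apply _ MeasurableSet.univ]; simp⟩
  haveI : (ae π).NeBot := ae_neBot.mpr (IsProbabilityMeasure.ne_zero π)
  rcases eq_or_ne (∫⁻ z, ∫⁻ z', klDiv' (κ z) (η z') ∂π ∂π) ⊤ with htop | hfin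
  · rw [htop]; exact le_top
  -- kernels on the product space, for joint measurability of singular parts
  set κh : Kernel (Z × Z) Y := κ.comap Prod.fst measurable_fst with hκh_def
  set ηh : Kernel (Z × Z) Y := η.comap Prod.snd measurable_snd with hηh_def
  set sing : Z × Z → ℝ≥0∞ := fun w => Kernel.singularPart κh ηh w Set.univ with hsing_def
  have hsing_meas : Measurable sing := Kernel.measurable_coe _ MeasurableSet.univ
  have hsing_eq : ∀ z z', sing (z, z') = ((κ z).singularPart (η z')) Set.univ := by
    intro z z'
    rw [hsing_def]
    simp only
    rw [Kernel.singularPart_eq_singularPart_measure, hκh_def, hηh_def,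
      Kernel.comap_apply, Kernel.comap_apply]
  have hbound : ∀ z z', ⊤ * sing (z, z') ≤ klDiv' (κ z) (η z') := by
    intro z z'
    rcases eq_or_ne (((κ z).singularPart (η z')) Set.univ) 0 with h0 | h0
    · rw [hsing_eq, h0, mul_zero]; exact zero_le
    · have hac : ¬ κ z ≪ η z' := by
        intro hac
        exact h0 (by rw [(Measure.singularPart_eq_zero _ _).mpr hac]; simp)
      rw [klDiv', if_neg (fun hc => hac hc.1)]
      exact le_top
  have hH : ∫⁻ z, ∫⁻ z', ⊤ * sing (z, z') ∂π ∂π ≠ ⊤ :=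
    ne_top_of_le_ne_top hfin
      (lintegral_mono fun z => lintegral_mono fun z' => hbound z z')
  have hinner_meas : Measurable fun z => ∫⁻ z', ⊤ * sing (z, z') ∂π :=
    Measurable.lintegral_prod_right (measurable_const.mul hsing_meas)
  have hae1 : ∀ᵐ z ∂π, ∀ᵐ z' ∂π, κ z ≪ η z' := by
    filter_upwards [ae_lt_top hinner_meas hH] with z hz
    have h3 := ae_lt_top (f := fun z' => ⊤ * sing (z, z'))
      (by exact measurable_const.mul (hsing_meas.comp measurable_prodMk_left)) hz.ne
    filter_upwards [h3] with z' hz'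
    by_contra hac
    have h0 : ((κ z).singularPart (η z')) Set.univ ≠ 0 := by
      intro h0
      exact hac ((Measure.singularPart_eq_zero _ _).mp (Measure.measure_univ_eq_zero.mp h0))
    rw [hsing_eq z z', ENNReal.top_mul h0] at hz'
    exact absurd hz' (lt_irrefl ⊤)
  have hae2 : ∀ᵐ z ∂π, κ z ≪ νb := by
    filter_upwards [hae1] with z hz
    refine Measure.AbsolutelyContinuous.mk fun s hs hνs => ?_
    have h4 : ∀ᵐ z' ∂π, η z' s = 0 := by
      have h5 := hνb_apply s hs
      rw [hνs] at h5
      exact (lintegral_eq_zero_iff (Kernel.measurable_coe η hs)).mp h5.symm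
    obtain ⟨z', hz'1, hz'2⟩ := (hz.and h4).exists
    exact hz'1 hz'2
  have hacb : μb ≪ νb := by
    refine Measure.AbsolutelyContinuous.mk fun s hs hνs => ?_
    rw [hμb_apply s hs]
    have h6 : ∀ᵐ z ∂π, κ z s = 0 := by
      filter_upwards [hae2] with z hz using hz hνs
    rw [lintegral_congr_ae h6, lintegral_zero]
  -- jointly measurable densities w.r.t. νb
  set νK : Kernel Z Y := Kernel.const Z νb with hνK_def
  set p : Z → Y → ℝ≥0∞ := Kernel.rnDeriv κ νK with hp_def
  set q : Z → Y → ℝ≥0∞ := Kernel.rnDeriv η νK with hq_def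
  have hp_meas : Measurable fun w : Z × Y => p w.1 w.2 := Kernel.measurable_rnDeriv κ νK
  have hq_meas : Measurable fun w : Z × Y => q w.1 w.2 := Kernel.measurable_rnDeriv η νK
  have hp_ae : ∀ z, p z =ᵐ[νb] (κ z).rnDeriv νb := by
    intro z
    have h7 := Kernel.rnDeriv_eq_rnDeriv_measure (κ := κ) (η := νK) (a := z)
    simpa [hνK_def, Kernel.const_apply] using h7
  have hq_ae : ∀ z', q z' =ᵐ[νb] (η z').rnDeriv νb := by
    intro z'
    have h7 := Kernel.rnDeriv_eq_rnDeriv_measure (κ := η) (η := νK) (a := z')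
    simpa [hνK_def, Kernel.const_apply] using h7
  set pbar : Y → ℝ≥0∞ := fun y => ∫⁻ z, p z y ∂π with hpbar_def
  set qbar : Y → ℝ≥0∞ := fun y => ∫⁻ z, q z y ∂π with hqbar_def
  have hpbar_meas : Measurable pbar := hp_meas.lintegral_prod_left'
  have hqbar_meas : Measurable qbar := hq_meas.lintegral_prod_left'
  have hκz : ∀ᵐ z ∂π, κ z = νb.withDensity (p z) := by
    filter_upwards [hae2] with z hz
    rw [withDensity_congr_ae (hp_ae z), Measure.withDensity_rnDeriv_eq _ _ hz]
  have hM1 : μb = νb.withDensity pbar := by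
    ext s hs
    rw [hμb_apply s hs, withDensity_apply _ hs]
    have e1 : ∫⁻ z, κ z s ∂π = ∫⁻ z, ∫⁻ y, p z y ∂(νb.restrict s) ∂π := by
      refine lintegral_congr_ae ?_
      filter_upwards [hκz] with z hz
      rw [hz, withDensity_apply _ hs]
    rw [e1, lintegral_lintegral_swap hp_meas.aemeasurable]
  have hpbar_rn : μb.rnDeriv νb =ᵐ[νb] pbar := by
    have h8 := Measure.rnDeriv_withDensity νb hpbar_meas
    rw [← hM1] at h8
    exact h8
  have hpz_le : ∀ z, ∫⁻ y, p z y ∂νb ≤ 1 := by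
    intro z
    rw [lintegral_congr_ae (hp_ae z)]
    calc ∫⁻ y, (κ z).rnDeriv νb y ∂νb ≤ κ z Set.univ := by
          have h9 := Measure.setLIntegral_rnDeriv_le (μ := κ z) (ν := νb) Set.univ
          rwa [setLIntegral_univ] at h9
      _ = 1 := measure_univ
  have hqz_le : ∀ z', ∫⁻ y, q z' y ∂νb ≤ 1 := by
    intro z'
    rw [lintegral_congr_ae (hq_ae z')]
    calc ∫⁻ y, (η z').rnDeriv νb y ∂νb ≤ η z' Set.univ := by
          have h9 := Measure.setLIntegral_rnDeriv_le (μ := η z') (ν := νb) Set.univ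
          rwa [setLIntegral_univ] at h9
      _ = 1 := measure_univ
  have hpbar_int : ∫⁻ y, pbar y ∂νb ≤ 1 := by
    calc ∫⁻ y, pbar y ∂νb = ∫⁻ z, ∫⁻ y, p z y ∂νb ∂π :=
          (lintegral_lintegral_swap hp_meas.aemeasurable).symm
      _ ≤ ∫⁻ _, 1 ∂π := lintegral_mono hpz_le
      _ = 1 := by simp
  have hqbar_int : ∫⁻ y, qbar y ∂νb ≤ 1 := by
    calc ∫⁻ y, qbar y ∂νb = ∫⁻ z, ∫⁻ y, q z y ∂νb ∂π :=
          (lintegral_lintegral_swap hq_meas.aemeasurable).symm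
      _ ≤ ∫⁻ _, 1 ∂π := lintegral_mono hqz_le
      _ = 1 := by simp
  have hwd_le : νb.withDensity qbar ≤ νb := by
    refine Measure.le_iff.mpr fun s hs => ?_
    rw [withDensity_apply _ hs]
    have e2 : ∫⁻ y in s, qbar y ∂νb = ∫⁻ z', ∫⁻ y, q z' y ∂(νb.restrict s) ∂π :=
      (lintegral_lintegral_swap hq_meas.aemeasurable).symm
    rw [e2]
    calc ∫⁻ z', ∫⁻ y, q z' y ∂(νb.restrict s) ∂π ≤ ∫⁻ z', η z' s ∂π := by
          refine lintegral_mono fun z' => ?_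
          have e3 : ∫⁻ y, q z' y ∂(νb.restrict s) = ∫⁻ y in s, (η z').rnDeriv νb y ∂νb :=
            lintegral_congr_ae (ae_restrict_of_ae (hq_ae z'))
          rw [e3]
          exact Measure.setLIntegral_rnDeriv_le s
      _ = νb s := (hνb_apply s hs).symm
  have hqbar_le1 : qbar ≤ᵐ[νb] 1 := by
    have h11 := Measure.rnDeriv_le_one_of_le hwd_le
    have h12 := Measure.rnDeriv_withDensity νb hqbar_meas
    filter_upwards [h11, h12] with y hy1 hy2
    rw [← hy2]
    exact hy1
  have hLHS : klDiv' μb νb = ∫⁻ y, gE (pbar y) ∂νb := by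
    rw [kl_eq μb νb hacb]
    refine lintegral_congr_ae ?_
    filter_upwards [hpbar_rn] with y hy
    rw [hy]
  have hpbar_fin : ∀ᵐ y ∂νb, pbar y ≠ ⊤ := by
    have h13 := ae_lt_top hpbar_meas (hpbar_int.trans_lt ENNReal.one_lt_top).ne
    filter_upwards [h13] with y h using h.ne
  have hsec_p : ∀ y : Y, Measurable fun z => p z y :=
    fun y => hp_meas.comp measurable_prodMk_right
  have hsec_q : ∀ y : Y, Measurable fun z => q z y :=
    fun y => hq_meas.comp measurable_prodMk_right
  have hchain : ∫⁻ y, gE (pbar y) ∂νb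
      ≤ ∫⁻ y, (∫⁻ z, ∫⁻ z', fE (p z y) (q z' y) ∂π ∂π + (1 - qbar y)) ∂νb := by
    refine lintegral_mono_ae ?_
    filter_upwards [hqbar_le1, hpbar_fin] with y h1 h2
    refine le_trans (gE_le_fE_add h1) ?_
    refine add_le_add ?_ le_rfl
    exact jensen_fE π (hsec_p y) (hsec_q y) h2 (h1.trans_lt ENNReal.one_lt_top).ne
  have hG : Measurable fun w : Z × Y => ∫⁻ z', fE (p w.1 w.2) (q z' w.2) ∂π := by
    refine Measurable.lintegral_prod_right'
      (f := fun u : (Z × Y) × Z => fE (p u.1.1 u.1.2) (q u.2 u.1.2)) ?_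
    exact measurable_fE.comp ((hp_meas.comp measurable_fst).prodMk
      (hq_meas.comp (measurable_snd.prodMk measurable_fst.snd)))
  have hT_meas : Measurable fun y => ∫⁻ z, ∫⁻ z', fE (p z y) (q z' y) ∂π ∂π :=
    hG.lintegral_prod_left'
  have hsplit : ∫⁻ y, (∫⁻ z, ∫⁻ z', fE (p z y) (q z' y) ∂π ∂π + (1 - qbar y)) ∂νb
      = ∫⁻ y, (∫⁻ z, ∫⁻ z', fE (p z y) (q z' y) ∂π ∂π) ∂νb
        + ∫⁻ y, (1 - qbar y) ∂νb :=
    lintegral_add_left hT_meas _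
  have hsub : ∫⁻ y, (1 - qbar y) ∂νb = 1 - ∫⁻ y, qbar y ∂νb := by
    have h := lintegral_sub (μ := νb) (f := fun _ => (1:ℝ≥0∞)) hqbar_meas
      (hqbar_int.trans_lt ENNReal.one_lt_top).ne hqbar_le1
    simpa using h
  have hswapT : ∫⁻ y, (∫⁻ z, ∫⁻ z', fE (p z y) (q z' y) ∂π ∂π) ∂νb
      = ∫⁻ z, ∫⁻ z', ∫⁻ y, fE (p z y) (q z' y) ∂νb ∂π ∂π := by
    rw [← lintegral_lintegral_swap (f := fun z y => ∫⁻ z', fE (p z y) (q z' y) ∂π)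
      hG.aemeasurable]
    refine lintegral_congr fun z => ?_
    rw [← lintegral_lintegral_swap (f := fun z' y => fE (p z y) (q z' y))
      (measurable_fE.comp ((hp_meas.comp (measurable_const.prodMk measurable_snd)).prodMk
        (hq_meas.comp (measurable_fst.prodMk measurable_snd)))).aemeasurable]
  have hRHS : ∫⁻ z, ∫⁻ z', (∫⁻ y, fE (p z y) (q z' y) ∂νb
        + (1 - ∫⁻ y, q z' y ∂νb)) ∂π ∂π
      ≤ ∫⁻ z, ∫⁻ z', klDiv' (κ z) (η z') ∂π ∂π := by
    refine lintegral_mono_ae ?_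
    filter_upwards [hae1, hae2] with z hz1 hz2
    refine lintegral_mono_ae ?_
    filter_upwards [hz1] with z' hz'
    have h14 := kl_ge (κ z) (η z') νb hz' hz2
    refine le_trans (le_of_eq ?_) h14
    congr 1
    · refine lintegral_congr_ae ?_
      filter_upwards [hp_ae z, hq_ae z'] with y e1 e2
      rw [e1, e2]
    · congr 1
      refine lintegral_congr_ae ?_
      filter_upwards [hq_ae z'] with y e2
      rw [e2]
  have hc_meas : Measurable fun z' => (1:ℝ≥0∞) - ∫⁻ y, q z' y ∂νb :=
    measurable_const.sub hq_meas.lintegral_prod_right'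
  have hsplit2 : ∫⁻ z, ∫⁻ z', (∫⁻ y, fE (p z y) (q z' y) ∂νb
        + (1 - ∫⁻ y, q z' y ∂νb)) ∂π ∂π
      = ∫⁻ z, ∫⁻ z', ∫⁻ y, fE (p z y) (q z' y) ∂νb ∂π ∂π
        + ∫⁻ z', (1 - ∫⁻ y, q z' y ∂νb) ∂π := by
    have e4 : ∀ z, ∫⁻ z', (∫⁻ y, fE (p z y) (q z' y) ∂νb
          + (1 - ∫⁻ y, q z' y ∂νb)) ∂π
        = ∫⁻ z', ∫⁻ y, fE (p z y) (q z' y) ∂νb ∂π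
          + ∫⁻ z', (1 - ∫⁻ y, q z' y ∂νb) ∂π :=
      fun z => lintegral_add_right _ hc_meas
    rw [lintegral_congr e4, lintegral_add_right _ measurable_const, lintegral_const,
      measure_univ, mul_one]
  have hC : ∫⁻ z', (1 - ∫⁻ y, q z' y ∂νb) ∂π = 1 - ∫⁻ y, qbar y ∂νb := by
    have h := lintegral_sub (μ := π) (f := fun _ => (1:ℝ≥0∞))
      (hq_meas.lintegral_prod_right')
      (ne_top_of_le_ne_top ENNReal.one_ne_top
        ((lintegral_mono hqz_le).trans (by simp)))
      (Filter.Eventually.of_forall hqz_le)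
    rw [show (∫⁻ _, (1:ℝ≥0∞) ∂π) = 1 by simp,
      lintegral_lintegral_swap hq_meas.aemeasurable] at h
    exact h
  calc klDiv' μb νb = ∫⁻ y, gE (pbar y) ∂νb := hLHS
    _ ≤ ∫⁻ y, (∫⁻ z, ∫⁻ z', fE (p z y) (q z' y) ∂π ∂π + (1 - qbar y)) ∂νb := hchain
    _ = ∫⁻ y, (∫⁻ z, ∫⁻ z', fE (p z y) (q z' y) ∂π ∂π) ∂νb
        + (1 - ∫⁻ y, qbar y ∂νb) := by rw [hsplit, hsub]
    _ = ∫⁻ z, ∫⁻ z', ∫⁻ y, fE (p z y) (q z' y) ∂νb ∂π ∂π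
        + (1 - ∫⁻ y, qbar y ∂νb) := by rw [hswapT]
    _ = ∫⁻ z, ∫⁻ z', (∫⁻ y, fE (p z y) (q z' y) ∂νb
        + (1 - ∫⁻ y, q z' y ∂νb)) ∂π ∂π := by rw [hsplit2, hC]
    _ ≤ ∫⁻ z, ∫⁻ z', klDiv' (κ z) (η z') ∂π ∂π := hRHS
end

section
/- Let (Ω, ℙ) be a probability space, n ≥ 1, and let Y⁰_i, Y¹_i (i ∈ Fin n) be square-integrable real random variables. Suppose there exist k : Fin n → Fin n → ℝ and real constants ψ₁₁, ψ₁₂, ψ₂₁, ψ₂₂, σ₁₁, σ₁₂, σ₂₁, σ₂₂ such that for all i, j: Cov(Y⁰_i, Y⁰_j) = ψ₁₁·k(i,j) + σ₁₁·1[i=j], Cov(Y¹_i, Y¹_j) = ψ₂₂·k(i,j) + σ₂₂·1[i=j], Cov(Y⁰_i, Y¹_j) = ψ₁₂·k(i,j) + σ₁₂·1[i=j], and Cov(Y¹_i, Y⁰_j) = ψ₂₁·k(i,j) + σ₂₁·1[i=j]. Let w : Fin n → ℝ satisfy w_i ∈ {0,1} for all i, and define the observed outcomes Y^obs_i := (1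 − w_i)·Y⁰_i + w_i·Y¹_i. Then for all i, j: Cov(Y^obs_i, Y^obs_j) = [(1−w_i)(1−w_j)ψ₁₁ + w_i w_j ψ₂₂ + (1−w_i)w_j ψ₁₂ + w_i(1−w_j)ψ₂₁]·k(i,j) + [(1−w_i)σ₁₁ + w_i σ₂₂]·1[i=j]. -/
open MeasureTheory ProbabilityTheory

/-- Covariance `Cov(X,Y) = E[(X − E X)(Y − E Y)]` of two real random variables. -/
noncomputable def cov {Ω : Type*} [MeasureSpace Ω] (X Y : Ω → ℝ) : ℝ :=
  ∫ ω, (X ω - ∫ ω', X ω') * (Y ω - ∫ ω', Y ω')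

/-- The covariance content of Lemma 2 of FedCI for the observed outcomes: if the potential
outcomes `Y⁰, Y¹` have joint covariance `Ψ ⊗ K + Σ ⊗ I`, then the observed outcomes
`Y^obs_i = (1 − w_i) Y⁰_i + w_i Y¹_i` (with binary `w`) have covariance kernel `k_obs`. -/
theorem fedci_cov_obs {Ω : Type*} [MeasureSpace Ω] [IsProbabilityMeasure (ℙ : Measure Ω)]
    (n : ℕ) (hn : 1 ≤ n) (Y0 Y1 : Fin n → Ω → ℝ)
    (hY0 : ∀ i, MemLp (Y0 i) 2 ℙ) (hY1 : ∀ i, MemLp (Y1 i) 2 ℙ)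
    (k : Fin n → Fin n → ℝ)
    (ψ11 ψ12 ψ21 ψ22 σ11 σ12 σ21 σ22 : ℝ)
    (h00 : ∀ i j, cov (Y0 i) (Y0 j) = ψ11 * k i j + σ11 * (if i = j then 1 else 0))
    (h11 : ∀ i j, cov (Y1 i) (Y1 j) = ψ22 * k i j + σ22 * (if i = j then 1 else 0))
    (h01 : ∀ i j, cov (Y0 i) (Y1 j) = ψ12 * k i j + σ12 * (if i = j then 1 else 0))
    (h10 : ∀ i j, cov (Y1 i) (Y0 j) = ψ21 * k i j + σ21 * (if i = j then 1 else 0))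
    (w : Fin n → ℝ) (hw : ∀ i, w i = 0 ∨ w i = 1) :
    ∀ i j, cov (fun ω => (1 - w i) * Y0 i ω + w i * Y1 i ω)
             (fun ω => (1 - w j) * Y0 j ω + w j * Y1 j ω)
        = ((1 - w i) * (1 - w j) * ψ11 + w i * w j * ψ22
              + (1 - w i) * w j * ψ12 + w i * (1 - w j) * ψ21) * k i j
          + ((1 - w i) * σ11 + w i * σ22) * (if i = j then 1 else 0) := by
  intro i j
  rcases hw i with hi | hi <;> rcases hw j with hj | hj <;>
    rw [hi, hj] <;>
    simp only [sub_zero, one_mul, zero_mul, add_zero, zero_add, sub_self, mul_zero, mul_one]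
  · rw [h00]
  · rw [h01]
    by_cases hij : i = j
    · subst hij; rw [hi] at hj; norm_num at hj
    · simp [hij]
  · rw [h10]
    by_cases hij : i = j
    · subst hij; rw [hi] at hj; norm_num at hj
    · simp [hij]
  · rw [h11]
end

section
/- Let (Ω, ℙ) be a probability space, n ≥ 1, and let Y⁰_i, Y¹_i (i ∈ Fin n) be square-integrable real random variables. Suppose there exist k : Fin n → Fin n → ℝ and real constants ψ₁₁, ψ₁₂, ψ₂₁, ψ₂₂, σ₁₁, σ₁₂, σ₂₁, σ₂₂ such that for all i, j: Cov(Y⁰_i, Y⁰_j) = ψ₁₁·k(i,j) + σ₁₁·1[i=j], Cov(Y¹_i, Y¹_j) = ψ₂₂·k(i,j) + σ₂₂·1[i=j], Cov(Y⁰_i, Y¹_j) = ψ₁₂·k(i,j) + σ₁₂·1[i=j], and Cov(Y¹_i, Y⁰_j) = ψ₂₁·k(i,j) + σ₂₁·1[i=j]. Let w : Fin n → ℝ satisfy w_i ∈ {0,1} for all i, and define the missing outcomes Y^mis_i := w_i·Y⁰_i + (1 − w_i)·Y¹_i. Then for all i, j: Cov(Y^mis_i, Y^mis_j) = [w_i w_j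 ψ₁₁ + (1−w_i)(1−w_j)ψ₂₂ + w_i(1−w_j)ψ₁₂ + (1−w_i)w_j ψ₂₁]·k(i,j) + [w_i σ₁₁ + (1−w_i)σ₂₂]·1[i=j]. -/
open MeasureTheory ProbabilityTheory

/-- The covariance content of Lemma 2 of FedCI for the unobserved (missing) outcomes: if the
potential outcomes `Y⁰, Y¹` have joint covariance `Ψ ⊗ K + Σ ⊗ I`, then the missing outcomes
`Y^mis_i = w_i Y⁰_i + (1 − w_i) Y¹_i` (with binary `w`) have covariance kernel `k_mis`. -/
theorem fedci_cov_mis {Ω : Type*} [MeasureSpace Ω] [IsProbabilityMeasure (ℙ : Measure Ω)]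
    (n : ℕ) (hn : 1 ≤ n) (Y0 Y1 : Fin n → Ω → ℝ)
    (hY0 : ∀ i, MemLp (Y0 i) 2 ℙ) (hY1 : ∀ i, MemLp (Y1 i) 2 ℙ)
    (k : Fin n → Fin n → ℝ)
    (ψ11 ψ12 ψ21 ψ22 σ11 σ12 σ21 σ22 : ℝ)
    (h00 : ∀ i j, cov (Y0 i) (Y0 j) = ψ11 * k i j + σ11 * (if i = j then 1 else 0))
    (h11 : ∀ i j, cov (Y1 i) (Y1 j) = ψ22 * k i j + σ22 * (if i = j then 1 else 0))
    (h01 : ∀ i j, cov (Y0 i) (Y1 j) = ψ12 * k i j + σ12 * (if i = j then 1 else 0))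
    (h10 : ∀ i j, cov (Y1 i) (Y0 j) = ψ21 * k i j + σ21 * (if i = j then 1 else 0))
    (w : Fin n → ℝ) (hw : ∀ i, w i = 0 ∨ w i = 1) :
    ∀ i j, cov (fun ω => w i * Y0 i ω + (1 - w i) * Y1 i ω)
             (fun ω => w j * Y0 j ω + (1 - w j) * Y1 j ω)
        = (w i * w j * ψ11 + (1 - w i) * (1 - w j) * ψ22
              + w i * (1 - w j) * ψ12 + (1 - w i) * w j * ψ21) * k i j
          + (w i * σ11 + (1 - w i) * σ22) * (if i = j then 1 else 0) := by
  intro i j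
  rcases hw i with hi | hi <;> rcases hw j with hj | hj <;>
    [skip; skip; skip; skip] <;>
  · have ei : (fun ω => w i * Y0 i ω + (1 - w i) * Y1 i ω)
        = (if w i = 1 then Y0 i else Y1 i) := by
      funext ω; simp [hi]
    have ej : (fun ω => w j * Y0 j ω + (1 - w j) * Y1 j ω)
        = (if w j = 1 then Y0 j else Y1 j) := by
      funext ω; simp [hj]
    rw [ei, ej]
    by_cases hij : i = j <;>
      simp_all [h00, h11, h01, h10, hi, hj] <;> ring
end
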